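/- arXiv:1303.2280 — 2 statements merged into one kernel-verified Lean document; each statement's English description precedes it below -/
import Mathlib

section
/- Let A, G be real n×n matrices and P, Q symmetric positive definite n×n matrices satisfying the Lyapunov-type identity Aᵀ P + P A = M − Q for some symmetric matrix M ⪯ 0 (or more specifically, suppose Aᵀ P + P A + Q ⪯ 0). If 2 ‖P‖ ‖G‖ < λmin(Q), then (A+G)ᵀ P + P (A+G) is negative definite. -/
open Matrix

/-- Induced `l2` (spectral) operator norm of a real matrix. -/
noncomputable def opNorm {m n : ℕ} (M : Matrix (Fin m) (Fin n) ℝ) : ℝ :=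
  ‖(LinearMap.toContinuousLinearMap (Matrix.toEuclideanLin M) :
      EuclideanSpace ℝ (Fin n) →L[ℝ] EuclideanSpace ℝ (Fin m))‖

/-- Smallest eigenvalue of a symmetric real matrix (via the Rayleigh quotient). -/
noncomputable def lamMin {n : ℕ} (M : Matrix (Fin n) (Fin n) ℝ) : ℝ :=
  ⨅ x : {x : EuclideanSpace ℝ (Fin n) // ‖x‖ = 1},
    (inner ℝ ((Matrix.toEuclideanLin M) x.1) x.1 : ℝ)

/-- Largest eigenvalue of a symmetric real matrix (via the Rayleigh quotient). -/
noncomputable def lamMax {n : ℕ} (M : Matrix (Fin n) (Fin n) ℝ) : ℝ :=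
  ⨆ x : {x : EuclideanSpace ℝ (Fin n) // ‖x‖ = 1},
    (inner ℝ ((Matrix.toEuclideanLin M) x.1) x.1 : ℝ)

/-- A real matrix is Hurwitz if all its (complex) eigenvalues, i.e. the roots of its
characteristic polynomial over `ℂ`, have negative real part. -/
def IsHurwitz {ι : Type*} [Fintype ι] [DecidableEq ι] (A : Matrix ι ι ℝ) : Prop :=
  ∀ μ : ℂ, ((A.map (Complex.ofReal)).charpoly).IsRoot μ → μ.re < 0

/-! For `x ≠ 0` the quadratic form of `-((A + G)ᵀ P + P (A + G))` splits as
`xᵀ (-(Aᵀ P + P A + Q)) x + xᵀ Q x - 2 ⟪P x, G x⟫`. The first term is nonnegative, the second is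
at least `λmin(Q) ‖x‖²` by the Rayleigh-quotient description of `λmin`, and Cauchy–Schwarz bounds
the cross term by `2 ‖P‖ ‖G‖ ‖x‖²`. -/

open WithLp

section Rayleigh

variable {n : ℕ}

theorem norm_toEuclideanLin_le {m : ℕ} (M : Matrix (Fin m) (Fin n) ℝ)
    (x : EuclideanSpace ℝ (Fin n)) : ‖toEuclideanLin M x‖ ≤ opNorm M * ‖x‖ :=
  (LinearMap.toContinuousLinearMap (toEuclideanLin M)).le_opNorm x

theorem neg_opNorm_le_inner_toEuclideanLin (M : Matrix (Fin n) (Fin n) ℝ)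
    {x : EuclideanSpace ℝ (Fin n)} (hx : ‖x‖ = 1) :
    -opNorm M ≤ inner ℝ (toEuclideanLin M x) x := by
  have h := (abs_real_inner_le_norm (toEuclideanLin M x) x).trans
    (mul_le_mul_of_nonneg_right (norm_toEuclideanLin_le M x) (norm_nonneg x))
  rw [hx, mul_one, mul_one] at h
  exact neg_le_of_abs_le h

theorem lamMin_le_inner_toEuclideanLin (M : Matrix (Fin n) (Fin n) ℝ)
    {x : EuclideanSpace ℝ (Fin n)} (hx : ‖x‖ = 1) :
    lamMin M ≤ inner ℝ (toEuclideanLin M x) x :=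
  ciInf_le ⟨-opNorm M, by rintro _ ⟨y, rfl⟩; exact neg_opNorm_le_inner_toEuclideanLin M y.2⟩
    (⟨x, hx⟩ : {x : EuclideanSpace ℝ (Fin n) // ‖x‖ = 1})

theorem lamMin_mul_norm_sq_le_inner_toEuclideanLin (M : Matrix (Fin n) (Fin n) ℝ)
    (x : EuclideanSpace ℝ (Fin n)) :
    lamMin M * ‖x‖ ^ 2 ≤ inner ℝ (toEuclideanLin M x) x := by
  rcases eq_or_ne x 0 with rfl | hx
  · simp
  have h := lamMin_le_inner_toEuclideanLin M (norm_smul_inv_norm (𝕜 := ℝ) hx)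
  rw [RCLike.ofReal_real_eq_id, id, map_smul, real_inner_smul_left, real_inner_smul_right,
    ← mul_assoc, ← mul_inv, ← sq, le_inv_mul_iff₀ (by positivity)] at h
  rwa [mul_comm]

end Rayleigh

section QuadraticForm

variable {n : ℕ}

theorem dotProduct_mulVec_eq_inner (M : Matrix (Fin n) (Fin n) ℝ) (x : Fin n → ℝ) :
    x ⬝ᵥ (M *ᵥ x) = inner ℝ (toEuclideanLin M (toLp 2 x)) (toLp 2 x) := by
  simp [EuclideanSpace.inner_toLp_toLp]

theorem lamMin_mul_norm_sq_le_dotProduct_mulVec (M : Matrix (Fin n) (Fin n) ℝ) (x : Fin n → ℝ) :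
    lamMin M * ‖toLp 2 x‖ ^ 2 ≤ x ⬝ᵥ (M *ᵥ x) :=
  (dotProduct_mulVec_eq_inner M x).symm ▸ lamMin_mul_norm_sq_le_inner_toEuclideanLin M _

theorem mulVec_dotProduct_mulVec_le_opNorm (M N : Matrix (Fin n) (Fin n) ℝ) (x : Fin n → ℝ) :
    (M *ᵥ x) ⬝ᵥ (N *ᵥ x) ≤ opNorm M * opNorm N * ‖toLp 2 x‖ ^ 2 := by
  calc (M *ᵥ x) ⬝ᵥ (N *ᵥ x)
      = inner ℝ (toEuclideanLin M (toLp 2 x)) (toEuclideanLin N (toLp 2 x)) := by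
        simp [EuclideanSpace.inner_toLp_toLp, dotProduct_comm]
    _ ≤ ‖toEuclideanLin M (toLp 2 x)‖ * ‖toEuclideanLin N (toLp 2 x)‖ := real_inner_le_norm _ _
    _ ≤ opNorm M * ‖toLp 2 x‖ * (opNorm N * ‖toLp 2 x‖) :=
        mul_le_mul (norm_toEuclideanLin_le M _) (norm_toEuclideanLin_le N _) (norm_nonneg _)
          ((norm_nonneg _).trans (norm_toEuclideanLin_le M _))
    _ = opNorm M * opNorm N * ‖toLp 2 x‖ ^ 2 := by ring

end QuadraticForm

section Symmetric

variable {ι : Type*} [Fintype ι]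

theorem isSymm_transpose_mul_add_mul {P : Matrix ι ι ℝ} (hP : P.IsSymm) (A : Matrix ι ι ℝ) :
    (Aᵀ * P + P * A).IsSymm := by
  rw [IsSymm, transpose_add, transpose_mul, transpose_mul, transpose_transpose, hP.eq, add_comm]

theorem dotProduct_transpose_mul_add_mul_mulVec {P : Matrix ι ι ℝ} (hP : P.IsSymm)
    (G : Matrix ι ι ℝ) (x : ι → ℝ) :
    x ⬝ᵥ ((Gᵀ * P + P * G) *ᵥ x) = 2 * ((P *ᵥ x) ⬝ᵥ (G *ᵥ x)) := by
  rw [add_mulVec, dotProduct_add, ← mulVec_mulVec, ← mulVec_mulVec, dotProduct_mulVec,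
    vecMul_transpose, dotProduct_mulVec x P, ← mulVec_transpose, hP.eq, dotProduct_comm, two_mul]

end Symmetric

theorem lyap_perturbation_general {n : ℕ} (A G P Q : Matrix (Fin n) (Fin n) ℝ)
    (hP : P.PosDef)
    (hLyap : (-(Aᵀ * P + P * A + Q)).PosSemidef)
    (hpert : 2 * opNorm P * opNorm G < lamMin Q) :
    (-((A + G)ᵀ * P + P * (A + G))).PosDef := by
  have hPs : P.IsSymm := isHermitian_iff_isSymm.mp hP.isHermitian
  refine .of_dotProduct_mulVec_pos
    (isHermitian_iff_isSymm.mpr (isSymm_transpose_mul_add_mul hPs _).neg) fun x hx => ?_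
  have hsplit : -((A + G)ᵀ * P + P * (A + G)) = -(Aᵀ * P + P * A + Q) + Q - (Gᵀ * P + P * G) := by
    rw [transpose_add]; noncomm_ring
  have hx2 : 0 < ‖toLp 2 x‖ ^ 2 := pow_pos (norm_pos_iff.mpr (by simpa using hx)) 2
  have hLyap_x := hLyap.dotProduct_mulVec_nonneg x
  rw [star_trivial] at hLyap_x
  rw [hsplit, star_trivial, sub_mulVec, add_mulVec, dotProduct_sub, dotProduct_add,
    dotProduct_transpose_mul_add_mul_mulVec hPs]
  linarith [lamMin_mul_norm_sq_le_dotProduct_mulVec Q x,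
    mulVec_dotProduct_mulVec_le_opNorm P G x, mul_lt_mul_of_pos_right hpert hx2]

/-- Lyapunov perturbation: if `Aᵀ P + P A + Q ⪯ 0` and `2 ‖P‖ ‖G‖ < λmin(Q)`,
then `(A+G)ᵀ P + P (A+G)` is negative definite. -/
theorem lyap_perturbation {n : ℕ} (A G P Q : Matrix (Fin n) (Fin n) ℝ)
    (hP : P.PosDef) (hQ : Q.PosDef)
    (hLyap : (-(Aᵀ * P + P * A + Q)).PosSemidef)
    (hpert : 2 * opNorm P * opNorm G < lamMin Q) :
    (-((A + G)ᵀ * P + P * (A + G))).PosDef :=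
  lyap_perturbation_general A G P Q hP hLyap hpert
end

section
/- Suppose A is a real n×n matrix, B is n×m, and there exists a symmetric positive definite Z such that Z Aᵀ + A Z − B Bᵀ is negative definite. Then with K = −(1/2) Bᵀ Z⁻¹, the closed-loop matrix A + B K is Hurwitz (all eigenvalues have negative real part). -/
/-!
The feedback `K = -(1/2) Bᵀ Z⁻¹` is chosen so that the closed-loop matrix `F = A + B K` satisfies
`Z Fᵀ + F Z = Z Aᵀ + A Z - B Bᵀ`, so `Z` is a Lyapunov certificate for `F`. If `Fᵀ v = μ v` with
`v ≠ 0` (over `ℂ`), the Hermitian form of `Z Fᵀ + F Z` at `v` equals `2 (Re μ) v* Z v`, which is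
negative while `v* Z v > 0`; hence `Re μ < 0`.
-/

open Matrix

open scoped ComplexOrder

namespace Matrix

variable {ι κ : Type*} [Fintype ι] [Fintype κ]

theorem exists_mulVec_eq_smul_of_isRoot_charpoly {K : Type*} [Field K] [DecidableEq ι]
    {A : Matrix ι ι K} {μ : K} (hμ : A.charpoly.IsRoot μ) : ∃ v ≠ 0, A *ᵥ v = μ • v := by
  rw [← mem_spectrum_iff_isRoot_charpoly, ← spectrum_toLin',
    ← Module.End.hasEigenvalue_iff_mem_spectrum] at hμ
  obtain ⟨v, hv⟩ := hμ.exists_hasEigenvector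
  exact ⟨v, hv.2, hv.apply_eq_smul⟩

theorem re_star_dotProduct_map_ofReal_mulVec (M : Matrix ι ι ℝ) (v : ι → ℂ) :
    (star v ⬝ᵥ M.map Complex.ofReal *ᵥ v).re =
      (fun i ↦ (v i).re) ⬝ᵥ M *ᵥ (fun i ↦ (v i).re) +
        (fun i ↦ (v i).im) ⬝ᵥ M *ᵥ (fun i ↦ (v i).im) := by
  simp only [dotProduct, mulVec, map_apply, Pi.star_apply, Complex.re_sum, Finset.mul_sum,
    ← Finset.sum_add_distrib]
  refine Finset.sum_congr rfl fun i _ ↦ Finset.sum_congr rfl fun j _ ↦ ?_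
  simp only [Complex.mul_re, Complex.mul_im, Complex.star_def, Complex.conj_re, Complex.conj_im,
    Complex.ofReal_re, Complex.ofReal_im]
  ring

theorem PosDef.map_ofReal {M : Matrix ι ι ℝ} (hM : M.PosDef) :
    (M.map Complex.ofReal).PosDef := by
  have hH : (M.map Complex.ofReal).IsHermitian := hM.isHermitian.map _ fun _ ↦ by simp
  refine .of_dotProduct_mulVec_pos hH fun v hv ↦ ?_
  refine Complex.pos_iff.mpr ⟨?_, (hH.im_star_dotProduct_mulVec_self v).symm⟩
  rw [re_star_dotProduct_map_ofReal_mulVec]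
  have hpos {x : ι → ℝ} (hx : x ≠ 0) : 0 < x ⬝ᵥ M *ᵥ x := by
    simpa using hM.dotProduct_mulVec_pos hx
  have hnonneg (x : ι → ℝ) : 0 ≤ x ⬝ᵥ M *ᵥ x := by
    simpa using hM.posSemidef.dotProduct_mulVec_nonneg x
  obtain hre | him : (fun i ↦ (v i).re) ≠ 0 ∨ (fun i ↦ (v i).im) ≠ 0 := by
    by_contra! h
    exact hv (funext fun i ↦ Complex.ext (congrFun h.1 i) (congrFun h.2 i))
  · exact add_pos_of_pos_of_nonneg (hpos hre) (hnonneg _)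
  · exact add_pos_of_nonneg_of_pos (hnonneg _) (hpos him)

theorem re_lt_zero_of_lyapunov {𝕜 : Type*} [RCLike 𝕜] {M Z : Matrix ι ι 𝕜} (hZ : Z.PosDef)
    (hL : (-(Z * Mᴴ + M * Z)).PosDef) {μ : 𝕜} {v : ι → 𝕜} (hv : v ≠ 0)
    (hμ : Mᴴ *ᵥ v = μ • v) : RCLike.re μ < 0 := by
  set q := star v ⬝ᵥ Z *ᵥ v
  have hM : star v ᵥ* M = star μ • star v := by
    rw [← conjTranspose_conjTranspose M, ← star_mulVec, hμ, star_smul]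
  have hform : star v ⬝ᵥ (Z * Mᴴ + M * Z) *ᵥ v = (μ + star μ) * q := by
    rw [add_mulVec, dotProduct_add, ← mulVec_mulVec, ← mulVec_mulVec, hμ,
      dotProduct_mulVec (star v) M, hM, mulVec_smul, dotProduct_smul, smul_dotProduct,
      smul_eq_mul, smul_eq_mul, add_mul]
  have hq : 0 < RCLike.re q := (RCLike.pos_iff.mp (hZ.dotProduct_mulVec_pos hv)).1
  have hneg := (RCLike.pos_iff.mp (hL.dotProduct_mulVec_pos hv)).1
  rw [neg_mulVec, dotProduct_neg, hform, RCLike.star_def, RCLike.add_conj, map_neg,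
    ← RCLike.ofReal_ofNat, ← RCLike.ofReal_mul, RCLike.re_ofReal_mul] at hneg
  nlinarith

variable [DecidableEq ι]

theorem mul_transpose_add_mul_closedLoop {K : Type*} [Field K] [CharZero K]
    {A Z : Matrix ι ι K} (B : Matrix ι κ K) (hZ : Z.IsSymm) (hdet : IsUnit Z.det) :
    Z * (A + B * -((1/2 : K) • (Bᵀ * Z⁻¹)))ᵀ + (A + B * -((1/2 : K) • (Bᵀ * Z⁻¹))) * Z =
      Z * Aᵀ + A * Z - B * Bᵀ := by
  have hZZinv : Z * Z⁻¹ = 1 := mul_nonsing_inv Z hdet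
  have hZinvZ : Z⁻¹ * Z = 1 := nonsing_inv_mul Z hdet
  rw [transpose_add, transpose_mul, transpose_neg, transpose_smul, transpose_mul,
    transpose_nonsing_inv, hZ.eq, transpose_transpose]
  simp only [Matrix.mul_add, Matrix.add_mul, Matrix.mul_neg, Matrix.neg_mul, Matrix.mul_smul,
    Matrix.smul_mul, Matrix.mul_assoc, hZinvZ, ← Matrix.mul_assoc Z Z⁻¹, hZZinv,
    Matrix.one_mul, Matrix.mul_one]
  module

end Matrix

theorem IsHurwitz.of_lyapunov {ι : Type*} [Fintype ι] [DecidableEq ι] {M Z : Matrix ι ι ℝ}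
    (hZ : Z.PosDef) (hL : (-(Z * Mᵀ + M * Z)).PosDef) : IsHurwitz M := by
  intro μ hμ
  have hMH : (M.map Complex.ofReal)ᴴ = Mᵀ.map Complex.ofReal :=
    (conjTranspose_map _ fun _ ↦ by simp).symm
  obtain ⟨v, hv, hμv⟩ := exists_mulVec_eq_smul_of_isRoot_charpoly
    (A := (M.map Complex.ofReal)ᴴ) (by rwa [hMH, transpose_map, charpoly_transpose])
  have hmap : (-(Z * Mᵀ + M * Z)).map Complex.ofReal = -(Z.map Complex.ofReal *
      (M.map Complex.ofReal)ᴴ + M.map Complex.ofReal * Z.map Complex.ofReal) := by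
    rw [hMH]
    ext i j
    simp [mul_apply]
  exact re_lt_zero_of_lyapunov hZ.map_ofReal (hmap ▸ hL.map_ofReal) hv hμv

/-- If `Z ≻ 0` and `Z Aᵀ + A Z − B Bᵀ ≺ 0`, then `A + B K` with
`K = −(1/2) Bᵀ Z⁻¹` is Hurwitz. -/
theorem state_feedback_hurwitz {n m : ℕ} (A : Matrix (Fin n) (Fin n) ℝ)
    (B : Matrix (Fin n) (Fin m) ℝ) (Z : Matrix (Fin n) (Fin n) ℝ) (hZ : Z.PosDef)
    (hLMI : (-(Z * Aᵀ + A * Z - B * Bᵀ)).PosDef) :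
    IsHurwitz (A + B * (-((1/2 : ℝ) • (Bᵀ * Z⁻¹)))) := by
  refine IsHurwitz.of_lyapunov hZ ?_
  rwa [mul_transpose_add_mul_closedLoop B (isHermitian_iff_isSymm.mp hZ.isHermitian)
    ((isUnit_iff_isUnit_det Z).mp hZ.isUnit)]
end
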